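/- arXiv:2109.10203 — 2 statements merged into one kernel-verified Lean document; each statement's English description precedes it below -/
import Mathlib

section
/- Let (Γ,⊑) be an extended modular complex with vertex set V, and let Γ* be the 2-subdivision graph on V* = {(p,q) ∈ V×V : p ⊑ q}, where (p,q) and (p',q') are adjacent iff either p = p' and {q,q'} is an edge of Γ, or q = q' and {p,p'} is an edge of Γ. Then Γ* is connected, and its graph distance d* satisfies d*((p,q),(p',q')) = d(p,p') + d(q,q') for all (p,q),(p',q') ∈ V*. -/
namespace ZeroExt

variable {V : Type*}

/-- The metric interval `I(x,y)` in a graph. -/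
def interval (G : SimpleGraph V) (x y : V) : Set V :=
  {z | G.dist x z + G.dist z y = G.dist x y}

/-- `m` is a median of `x, y, z`. -/
def IsMedian (G : SimpleGraph V) (x y z m : V) : Prop :=
  m ∈ interval G x y ∧ m ∈ interval G y z ∧ m ∈ interval G x z

/-- A graph is modular if every triple of vertices has a median. -/
def Modular (G : SimpleGraph V) : Prop :=
  ∀ x y z : V, ∃ m : V, IsMedian G x y z m

/-- `(a,b,c)` is a shortest subpath. -/
def ShortestTriple (G : SimpleGraph V) (a b c : V) : Prop :=
  G.dist a b + G.dist b c = G.dist a c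

/-- `(a,b,c,d)` is a shortest subpath. -/
def ShortestQuad (G : SimpleGraph V) (a b c d : V) : Prop :=
  G.dist a b + G.dist b c + G.dist c d = G.dist a d

/-- `(x1,x2,x3,x4)` is an isometric rectangle. -/
def IsoRect (G : SimpleGraph V) (x1 x2 x3 x4 : V) : Prop :=
  ShortestTriple G x4 x1 x2 ∧ ShortestTriple G x1 x2 x3 ∧
    ShortestTriple G x2 x3 x4 ∧ ShortestTriple G x3 x4 x1

/-- A set of vertices is convex if it contains the interval of each pair of its points. -/
def Convex (G : SimpleGraph V) (U : Set V) : Prop :=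
  ∀ x ∈ U, ∀ y ∈ U, interval G x y ⊆ U

/-- `g` is a gate of `q` at `U`. -/
def IsGate (G : SimpleGraph V) (U : Set V) (q g : V) : Prop :=
  g ∈ U ∧ ∀ u ∈ U, G.dist q u = G.dist q g + G.dist g u

/-- A 4-cycle in a graph. -/
def IsFourCycle (G : SimpleGraph V) (x1 x2 x3 x4 : V) : Prop :=
  G.Adj x1 x2 ∧ G.Adj x2 x3 ∧ G.Adj x3 x4 ∧ G.Adj x4 x1 ∧ x1 ≠ x3 ∧ x2 ≠ x4

/-- A modular complex: a finite connected modular graph together with an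
acyclic admissible edge orientation. -/
structure ModularComplex (V : Type*) [Fintype V] where
  G : SimpleGraph V
  connected : G.Connected
  modular : Modular G
  ori : V → V → Prop
  ori_adj : ∀ {x y : V}, ori x y → G.Adj x y
  ori_total : ∀ {x y : V}, G.Adj x y → ori x y ∨ ori y x
  acyclic : ∀ {x y : V}, Relation.ReflTransGen ori x y → Relation.ReflTransGen ori y x → x = y
  admissible : ∀ {x1 x2 x3 x4 : V}, IsFourCycle G x1 x2 x3 x4 → ori x1 x2 → ori x4 x3

variable [Fintype V]

/-- The partial order `⪯` induced by the orientation. -/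
def ModularComplex.le (Γ : ModularComplex V) : V → V → Prop :=
  Relation.ReflTransGen Γ.ori

/-- The order interval `[p,q]`. -/
def ModularComplex.Icc (Γ : ModularComplex V) (p q : V) : Set V :=
  {x | Γ.le p x ∧ Γ.le x q}

/-- `m` is the greatest lower bound `p ∧ q`. -/
def ModularComplex.IsMeet (Γ : ModularComplex V) (p q m : V) : Prop :=
  Γ.le m p ∧ Γ.le m q ∧ ∀ x : V, Γ.le x p → Γ.le x q → Γ.le x m

/-- `j` is the least upper bound `p ∨ q`. -/
def ModularComplex.IsJoin (Γ : ModularComplex V) (p q j : V) : Prop :=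
  Γ.le p j ∧ Γ.le q j ∧ ∀ x : V, Γ.le p x → Γ.le q x → Γ.le j x

/-- `(p,q)` is a Boolean pair. -/
def ModularComplex.BooleanPair (Γ : ModularComplex V) (p q : V) : Prop :=
  ∃ (k : ℕ) (φ : Finset (Fin k) → V), Function.Injective φ ∧
    φ ∅ = p ∧ φ Finset.univ = q ∧
    ∀ (S : Finset (Fin k)) (i : Fin k), i ∉ S → Γ.ori (φ S) (φ (insert i S))

/-- An extended modular complex: a modular complex with an admissible relation `⊑`. -/
structure ExtendedModularComplex (V : Type*) [Fintype V] extends ModularComplex V where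
  sq : V → V → Prop
  sq_le : ∀ {p q : V}, sq p q → toModularComplex.le p q
  sq_refl : ∀ p : V, sq p p
  sq_edge : ∀ {p q : V}, ori p q → sq p q
  sq_interval : ∀ {p q a b : V}, sq p q → toModularComplex.le a b →
    a ∈ toModularComplex.Icc p q → b ∈ toModularComplex.Icc p q → sq a b
  sq_join : ∀ {p q1 q2 j : V}, sq p q1 → sq p q2 → toModularComplex.IsJoin q1 q2 j → sq p j
  sq_meet : ∀ {p1 p2 q m : V}, sq p1 q → sq p2 q → toModularComplex.IsMeet p1 p2 m → sq m q

/-- `L^+_p = {x : p ⊑ x}`. -/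
def ExtendedModularComplex.Lpos (Γ : ExtendedModularComplex V) (p : V) : Set V :=
  {x | Γ.sq p x}

/-- `L^-_p = {x : x ⊑ p}`. -/
def ExtendedModularComplex.Lneg (Γ : ExtendedModularComplex V) (p : V) : Set V :=
  {x | Γ.sq x p}

/-- `p, q` are ◇-neighbors. -/
def ExtendedModularComplex.DiamondNb (Γ : ExtendedModularComplex V) (p q : V) : Prop :=
  ∃ a b : V, Γ.sq a b ∧ p ∈ Γ.Icc a b ∧ q ∈ Γ.Icc a b

/-- The thickening `Δ(Γ)`. -/
def ExtendedModularComplex.thick (Γ : ExtendedModularComplex V) : SimpleGraph V where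
  Adj p q := p ≠ q ∧ Γ.DiamondNb p q
  symm := by
    constructor
    rintro p q ⟨hne, a, b, hab, hp, hq⟩
    exact ⟨hne.symm, a, b, hab, hq, hp⟩
  loopless := by constructor; rintro p ⟨hne, -⟩; exact hne rfl


/-- The 2-subdivision graph of an extended modular complex. -/
def ExtendedModularComplex.subdiv (Γ : ExtendedModularComplex V) :
    SimpleGraph {pq : V × V // Γ.sq pq.1 pq.2} where
  Adj a b := (a.1.1 = b.1.1 ∧ Γ.G.Adj a.1.2 b.1.2) ∨ (a.1.2 = b.1.2 ∧ Γ.G.Adj a.1.1 b.1.1)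
  symm := by
    constructor
    rintro a b (⟨h1, h2⟩ | ⟨h1, h2⟩)
    · exact Or.inl ⟨h1.symm, h2.symm⟩
    · exact Or.inr ⟨h1.symm, h2.symm⟩
  loopless := by
    constructor
    rintro a (⟨-, h⟩ | ⟨-, h⟩) <;> exact Γ.G.loopless.irrefl _ h

/-!
Every edge of `Γ.subdiv` moves one coordinate along an edge of `Γ`, which gives the lower
bound. For the upper bound it suffices that of two distinct vertices `(p, q)` and `(p', q')`,
one has a neighbour in `Γ.subdiv` that is one step closer to the other in the sum metric.

The sets `L⁺_p` and `L⁻_q` are connected and locally convex, hence convex (local convexity is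
global in modular graphs), hence gated. If neither vertex can move, `p` is the gate of `p'` in
`L⁻_q`, `q` is the gate of `q'` in `L⁺_p`, and symmetrically; comparing the gate identities
gives `d(p, q) = d(p', q')` and `d(p, p') = d(q, q')`. If `p ≠ p'`, the neighbour `c` of `p`
towards `p'` satisfies `c → p`, and this edge, which points away from `q'`, can be pushed
through squares along an oriented path from `p` up to `q`, giving an edge `e → q` with `e`
closer to `q'`. But every neighbour of `q` closer to `q'` lies above `q`: otherwise `p ⪯ e`,
so `e ∈ L⁺_p` and `q` would not be the gate of `q'` there.
-/

section Graph

variable {W : Type*} {G : SimpleGraph W}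

theorem mem_interval {x y z : W} : z ∈ interval G x y ↔ G.dist x z + G.dist z y = G.dist x y :=
  Iff.rfl

theorem _root_.SimpleGraph.Connected.exists_adj_dist_add_one (hc : G.Connected) {x y : W}
    (hxy : x ≠ y) : ∃ z, G.Adj x z ∧ G.dist z y + 1 = G.dist x y := by
  obtain ⟨p, hp⟩ := hc.exists_walk_length_eq_dist x y
  cases p with
  | nil => exact absurd rfl hxy
  | @cons _ z _ hxz q =>
    refine ⟨z, hxz, le_antisymm ?_ ?_⟩
    · have := SimpleGraph.dist_le q
      simp only [SimpleGraph.Walk.length_cons] at hp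
      omega
    · have := hc.dist_triangle (u := x) (v := z) (w := y)
      rw [SimpleGraph.dist_eq_one_iff_adj.2 hxz] at this
      omega

namespace Modular

theorem dist_ne_of_adj (hm : Modular G) (hc : G.Connected) {x y : W} (h : G.Adj x y) (z : W) :
    G.dist z x ≠ G.dist z y := by
  obtain ⟨m, hxy, hyz, hxz⟩ := hm x y z
  simp only [mem_interval, SimpleGraph.dist_eq_one_iff_adj.2 h] at hxy hyz hxz
  obtain rfl | rfl : m = x ∨ m = y := by
    rcases Nat.eq_zero_or_pos (G.dist x m) with h0 | _
    · exact .inl (hc.dist_eq_zero_iff.1 h0).symm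
    · exact .inr (hc.dist_eq_zero_iff.1 (by omega))
  all_goals simp only [SimpleGraph.dist_comm, SimpleGraph.dist_self,
    SimpleGraph.dist_eq_one_iff_adj.2 h] at *; omega

theorem dist_eq_add_one_or_of_adj (hm : Modular G) (hc : G.Connected) {x y : W}
    (h : G.Adj x y) (z : W) :
    G.dist y z = G.dist x z + 1 ∨ G.dist x z = G.dist y z + 1 := by
  have := hm.dist_ne_of_adj hc h z
  rcases h.diff_dist_adj (u := z) with h' | h' | h' <;>
    simp only [SimpleGraph.dist_comm (u := z)] at * <;> omega

/-- The quadrangle condition. -/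
theorem exists_common_adj (hm : Modular G) (hc : G.Connected) {w a b z : W} (ha : G.Adj w a)
    (hb : G.Adj w b) (hab : a ≠ b) (heq : G.dist a z = G.dist b z) :
    ∃ u, G.Adj a u ∧ G.Adj b u ∧ G.dist u z + 1 = G.dist a z := by
  have hdist : G.dist a b = 2 := by
    have := hc.dist_triangle (u := a) (v := w) (w := b)
    have := hc.pos_dist_of_ne hab
    have : G.dist a b ≠ 1 := fun h1 =>
      hm.dist_ne_of_adj hc (SimpleGraph.dist_eq_one_iff_adj.1 h1) z <| by
        simp only [SimpleGraph.dist_comm (u := z)]; exact heq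
    simp only [SimpleGraph.dist_comm (u := a) (v := w), SimpleGraph.dist_eq_one_iff_adj.2 ha,
      SimpleGraph.dist_eq_one_iff_adj.2 hb] at *
    omega
  obtain ⟨m, hab', hbz, haz⟩ := hm a b z
  simp only [mem_interval] at hab' hbz haz
  have ham : G.dist a m = 1 := by simp only [SimpleGraph.dist_comm] at *; omega
  have hbm : G.dist b m = 1 := by simp only [SimpleGraph.dist_comm] at *; omega
  refine ⟨m, SimpleGraph.dist_eq_one_iff_adj.1 ham, SimpleGraph.dist_eq_one_iff_adj.1 hbm, ?_⟩
  simp only [SimpleGraph.dist_comm] at *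
  omega

theorem exists_isGate [Finite W] (hm : Modular G) (hc : G.Connected) {U : Set W}
    (hU : Convex G U) (hne : U.Nonempty) (z : W) : ∃ g, IsGate G U z g := by
  obtain ⟨g, hg, hmin⟩ := U.exists_min_image (G.dist z) U.toFinite hne
  refine ⟨g, hg, fun u hu => ?_⟩
  obtain ⟨m, hzg, hgu, hzu⟩ := hm z g u
  have hmg : G.dist m g = 0 := by
    have := hmin m (hU g hg u hu hgu)
    rw [mem_interval] at hzg
    omega
  rw [hc.dist_eq_zero_iff.1 hmg] at hzu
  exact hzu.symm

theorem isGate_of_forall_adj [Finite W] (hm : Modular G) (hc : G.Connected) {U : Set W}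
    (hU : Convex G U) {z u : W} (hu : u ∈ U)
    (h : ∀ c ∈ U, G.Adj u c → G.dist c z + 1 ≠ G.dist u z) : IsGate G U z u := by
  obtain ⟨g, hgU, hg⟩ := hm.exists_isGate hc hU ⟨u, hu⟩ z
  obtain rfl | hne := eq_or_ne u g
  · exact ⟨hgU, hg⟩
  obtain ⟨c, huc, hcg⟩ := hc.exists_adj_dist_add_one hne
  have hcU : c ∈ U := hU u hu g hgU <| by
    rw [mem_interval, SimpleGraph.dist_eq_one_iff_adj.2 huc]; omega
  refine absurd ?_ (h c hcU huc)
  have := hg c hcU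
  have := hg u hu
  simp only [SimpleGraph.dist_comm] at *
  omega

end Modular

/-- In a triangle-free graph this says `interval G x y ⊆ S` whenever `G.dist x y = 2`. -/
def LocallyConvex (G : SimpleGraph W) (S : Set W) : Prop :=
  ∀ ⦃x y w⦄, x ∈ S → y ∈ S → x ≠ y → G.Adj x w → G.Adj y w → w ∈ S

theorem LocallyConvex.exists_adj_dist_add_one (hm : Modular G) (hc : G.Connected)
    {S : Set W} (hS : LocallyConvex G S) (hconn : (G.induce S).Preconnected) {x y : W}
    (hx : x ∈ S) (hy : y ∈ S) (hxy : x ≠ y) :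
    ∃ s ∈ S, G.Adj x s ∧ G.dist s y + 1 = G.dist x y := by
  -- `Relation.ReflTransGen R x y` says that some geodesic from `x` to `y` runs inside `S`.
  let R (a b : W) : Prop := b ∈ S ∧ G.Adj a b ∧ G.dist b y + 1 = G.dist a y
  have closed : ∀ n x, G.dist x y = n → x ∈ S → Relation.ReflTransGen R x y →
      ∀ z ∈ S, G.Adj x z → Relation.ReflTransGen R z y := by
    intro n
    induction n using Nat.strong_induction_on with
    | _ n ih =>
    intro x hn hxS hx z hz hxz
    rcases hm.dist_eq_add_one_or_of_adj hc hxz y with hzy | hxy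
    · exact .head ⟨hxS, hxz.symm, hzy.symm⟩ hx
    rcases hx.cases_head with rfl | ⟨s, ⟨hs, hxs, hsy⟩, hsT⟩
    · simp at hxy
    obtain rfl | hzs := eq_or_ne z s
    · exact hsT
    obtain ⟨u, hzu, hsu, huy⟩ := hm.exists_common_adj hc (z := y) hxz hxs hzs (by omega)
    have huT := ih _ (by omega) s rfl hs hsT u (hS hz hs hzs hzu hsu) hsu
    exact .head ⟨hS hz hs hzs hzu hsu, hzu, huy⟩ huT
  have hT (b : S) (hb : Relation.ReflTransGen (G.induce S).Adj ⟨y, hy⟩ b) :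
      Relation.ReflTransGen R b y := by
    induction hb with
    | refl => exact .refl
    | tail _ hbc ih => exact closed _ _ rfl (Subtype.property _) ih _ (Subtype.property _) hbc
  have := hT ⟨x, hx⟩ ((SimpleGraph.reachable_iff_reflTransGen _ _).1 (hconn _ _))
  obtain ⟨s, ⟨hs, hxs, hsy⟩, -⟩ := this.cases_head.resolve_left hxy
  exact ⟨s, hs, hxs, hsy⟩

theorem LocallyConvex.convex (hm : Modular G) (hc : G.Connected) {S : Set W}
    (hS : LocallyConvex G S) (hconn : (G.induce S).Preconnected) : Convex G S := by
  suffices h : ∀ n x y, G.dist x y = n → x ∈ S → y ∈ S → interval G x y ⊆ S from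
    fun x hx y hy => h _ x y rfl hx hy
  intro n
  induction n using Nat.strong_induction_on with
  | _ n ih =>
  intro x y hn hx hy z hz
  rw [mem_interval] at hz
  obtain rfl | hxz := eq_or_ne x z
  · exact hx
  obtain ⟨z₁, hxz₁, hz₁z⟩ := hc.exists_adj_dist_add_one hxz
  have hz₁y : G.dist z₁ y + 1 = G.dist x y := by
    have := hc.dist_triangle (u := z₁) (v := z) (w := y)
    have := hc.dist_triangle (u := x) (v := z₁) (w := y)
    rw [SimpleGraph.dist_eq_one_iff_adj.2 hxz₁] at this
    omega
  have hz₁ : z₁ ∈ S := by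
    obtain ⟨s, hs, hxs, hsy⟩ := hS.exists_adj_dist_add_one hm hc hconn hx hy
      (by rintro rfl; simp at hz₁y)
    obtain rfl | hz₁s := eq_or_ne z₁ s
    · exact hs
    obtain ⟨u, hz₁u, hsu, huy⟩ :=
      hm.exists_common_adj hc (z := y) hxz₁ hxs hz₁s (by omega)
    have hu : u ∈ S := ih _ (by omega) s y rfl hs hy <| by
      rw [mem_interval, SimpleGraph.dist_eq_one_iff_adj.2 hsu]; omega
    exact hS hx hu (by rintro rfl; omega) hxz₁ hz₁u.symm
  exact ih _ (by omega) z₁ y rfl hz₁ hy (by rw [mem_interval]; omega)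

end Graph

namespace ModularComplex

variable {Γ : ModularComplex V}

theorem le_of_ori {x y : V} (h : Γ.ori x y) : Γ.le x y :=
  .single h

theorem not_ori_of_ori {x y : V} (h : Γ.ori x y) : ¬Γ.ori y x := fun h' =>
  (Γ.ori_adj h).ne (Γ.acyclic (le_of_ori h) (le_of_ori h'))

theorem dist_eq_add_one_of_le_of_ori {a b c : V} (hab : Γ.le a b) (hbc : Γ.ori b c) :
    Γ.G.dist a c = Γ.G.dist a b + 1 := by
  induction hab generalizing c with
  | refl => simp [Γ.ori_adj hbc]
  | @tail e m _ hem ih =>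
    have hm := ih hem
    rcases Γ.modular.dist_eq_add_one_or_of_adj Γ.connected (Γ.ori_adj hbc) a with hc | hc
    · simpa only [SimpleGraph.dist_comm (v := a)] using hc
    have hec : e ≠ c := by rintro rfl; exact not_ori_of_ori hem hbc
    obtain ⟨u, heu, hcu, hu⟩ := Γ.modular.exists_common_adj Γ.connected (z := a)
      (Γ.ori_adj hem).symm (Γ.ori_adj hbc) hec
      (by simp only [SimpleGraph.dist_comm (v := a)] at *; omega)
    have hmu : m ≠ u := by rintro rfl; simp only [SimpleGraph.dist_comm (v := a)] at *; omega
    have heu' : Γ.ori e u :=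
      Γ.admissible ⟨Γ.ori_adj hbc, hcu, heu.symm, Γ.ori_adj hem, hmu, hec.symm⟩ hbc
    have := ih heu'
    simp only [SimpleGraph.dist_comm (v := a)] at *
    omega

theorem dist_add_of_le {a b c : V} (hab : Γ.le a b) (hbc : Γ.le b c) :
    Γ.G.dist a c = Γ.G.dist a b + Γ.G.dist b c := by
  induction hbc with
  | refl => simp
  | tail hbm hmc ih =>
    rw [dist_eq_add_one_of_le_of_ori (hab.trans hbm) hmc, dist_eq_add_one_of_le_of_ori hbm hmc,
      ih, add_assoc]

theorem dist_add_one_of_ori_of_le {x y z : V} (hxy : Γ.ori x y) (hyz : Γ.le y z) :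
    Γ.G.dist y z + 1 = Γ.G.dist x z := by
  rw [dist_add_of_le (le_of_ori hxy) hyz, SimpleGraph.dist_eq_one_iff_adj.2 (Γ.ori_adj hxy),
    add_comm]

theorem le_of_ori_of_dist_add_one {x w z : V} (hxz : Γ.le x z) (hxw : Γ.ori x w)
    (hw : Γ.G.dist w z + 1 = Γ.G.dist x z) : Γ.le w z := by
  induction hxz using Relation.ReflTransGen.head_induction_on generalizing w with
  | refl => simp at hw
  | @head x x₁ hxx₁ hx₁z ih =>
    have hx₁ := dist_add_one_of_ori_of_le hxx₁ hx₁z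
    obtain rfl | hwx₁ := eq_or_ne w x₁
    · exact hx₁z
    obtain ⟨v, hwv, hx₁v, hv⟩ := Γ.modular.exists_common_adj Γ.connected (z := z)
      (Γ.ori_adj hxw) (Γ.ori_adj hxx₁) hwx₁ (by omega)
    have hxv : x ≠ v := by rintro rfl; omega
    have hxw' := Γ.ori_adj hxw
    have hxx₁' := Γ.ori_adj hxx₁
    have hx₁v' : Γ.ori x₁ v :=
      Γ.admissible ⟨hxw', hwv, hx₁v.symm, hxx₁'.symm, hxv, hwx₁⟩ hxw
    have hwv' : Γ.ori w v :=
      Γ.admissible ⟨hxx₁', hx₁v, hwv.symm, hxw'.symm, hxv, hwx₁.symm⟩ hxx₁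
    exact .head hwv' (ih hx₁v' (by omega))

theorem isJoin_of_ori {x y w : V} (hxy : x ≠ y) (hx : Γ.ori x w) (hy : Γ.ori y w) :
    Γ.IsJoin x y w := by
  refine ⟨le_of_ori hx, le_of_ori hy, fun z hxz hyz => ?_⟩
  rcases Γ.modular.dist_eq_add_one_or_of_adj Γ.connected (Γ.ori_adj hx) z with hxw | hxw
  · rcases Γ.modular.dist_eq_add_one_or_of_adj Γ.connected (Γ.ori_adj hy) z with hyw | hyw
    · obtain ⟨u, hxu, hyu, hu⟩ := Γ.modular.exists_common_adj Γ.connected (z := z)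
        (Γ.ori_adj hx).symm (Γ.ori_adj hy).symm hxy (by omega)
      have hux : Γ.ori u x := (Γ.ori_total hxu).resolve_left fun hxu' =>
        not_ori_of_ori hy <| Γ.admissible
          ⟨hxu, hyu.symm, Γ.ori_adj hy, (Γ.ori_adj hx).symm, hxy, by rintro rfl; omega⟩ hxu'
      have := dist_add_one_of_ori_of_le hux hxz
      omega
    · exact le_of_ori_of_dist_add_one hyz hy hyw.symm
  · exact le_of_ori_of_dist_add_one hxz hx hxw.symm

theorem exists_ori_dist_add_one_of_le {a q c z : V} (haq : Γ.le a q) (hca : Γ.ori c a)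
    (hc : Γ.G.dist c z + 1 = Γ.G.dist a z)
    (ha : Γ.G.dist a z = Γ.G.dist a q + Γ.G.dist q z) :
    ∃ e, Γ.ori e q ∧ Γ.G.dist e z + 1 = Γ.G.dist q z := by
  induction haq using Relation.ReflTransGen.head_induction_on generalizing c with
  | refl => exact ⟨c, hca, hc⟩
  | @head a a₁ haa₁ ha₁q ih =>
    have ha₁ := dist_add_one_of_ori_of_le haa₁ ha₁q
    have ha₁z : Γ.G.dist a₁ z + 1 = Γ.G.dist a z := by
      have := Γ.connected.dist_triangle (u := a) (v := a₁) (w := z)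
      have := Γ.connected.dist_triangle (u := a₁) (v := q) (w := z)
      rw [SimpleGraph.dist_eq_one_iff_adj.2 (Γ.ori_adj haa₁)] at *
      omega
    have hca₁ : c ≠ a₁ := by rintro rfl; exact not_ori_of_ori hca haa₁
    obtain ⟨v, hcv, ha₁v, hv⟩ := Γ.modular.exists_common_adj Γ.connected (z := z)
      (Γ.ori_adj hca).symm (Γ.ori_adj haa₁) hca₁ (by omega)
    have hva₁ : Γ.ori v a₁ :=
      Γ.admissible ⟨Γ.ori_adj hca, Γ.ori_adj haa₁, ha₁v, hcv.symm, hca₁,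
        by rintro rfl; omega⟩ hca
    exact ih hva₁ (by omega) (by omega)

def dual (Γ : ModularComplex V) : ModularComplex V where
  G := Γ.G
  connected := Γ.connected
  modular := Γ.modular
  ori x y := Γ.ori y x
  ori_adj h := (Γ.ori_adj h).symm
  ori_total h := Γ.ori_total h.symm
  acyclic h₁ h₂ :=
    Γ.acyclic (Relation.reflTransGen_swap.1 h₂) (Relation.reflTransGen_swap.1 h₁)
  admissible := fun ⟨h₁₂, h₂₃, h₃₄, h₄₁, h₁₃, h₂₄⟩ h =>
    Γ.admissible ⟨h₁₂.symm, h₄₁.symm, h₃₄.symm, h₂₃.symm, h₂₄, h₁₃⟩ h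

theorem dual_G : Γ.dual.G = Γ.G :=
  rfl

theorem dual_le {x y : V} : Γ.dual.le x y ↔ Γ.le y x :=
  Relation.reflTransGen_swap

theorem dual_isJoin {x y j : V} : Γ.dual.IsJoin x y j ↔ Γ.IsMeet x y j := by
  simp only [IsJoin, IsMeet, dual_le]

theorem dual_isMeet {x y m : V} : Γ.dual.IsMeet x y m ↔ Γ.IsJoin x y m := by
  simp only [IsJoin, IsMeet, dual_le]

theorem isMeet_of_ori {x y w : V} (hxy : x ≠ y) (hx : Γ.ori w x) (hy : Γ.ori w y) :
    Γ.IsMeet x y w :=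
  dual_isJoin.1 (isJoin_of_ori (Γ := Γ.dual) hxy hx hy)

end ModularComplex

namespace ExtendedModularComplex

open ModularComplex

variable {Γ : ExtendedModularComplex V}

def dual (Γ : ExtendedModularComplex V) : ExtendedModularComplex V where
  toModularComplex := Γ.toModularComplex.dual
  sq p q := Γ.sq q p
  sq_le h := dual_le.2 (Γ.sq_le h)
  sq_refl := Γ.sq_refl
  sq_edge h := Γ.sq_edge h
  sq_interval h hab ha hb :=
    Γ.sq_interval h (dual_le.1 hab) ⟨dual_le.1 hb.2, dual_le.1 hb.1⟩
      ⟨dual_le.1 ha.2, dual_le.1 ha.1⟩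
  sq_join h₁ h₂ hj := Γ.sq_meet h₁ h₂ (dual_isJoin.1 hj)
  sq_meet h₁ h₂ hm := Γ.sq_join h₁ h₂ (dual_isMeet.1 hm)

theorem dual_toModularComplex : Γ.dual.toModularComplex = Γ.toModularComplex.dual :=
  rfl

theorem sq_of_mem_Icc {p q a : V} (h : Γ.sq p q) (hpa : Γ.le p a) (haq : Γ.le a q) :
    Γ.sq p a :=
  Γ.sq_interval h hpa ⟨.refl, Γ.sq_le h⟩ ⟨hpa, haq⟩

theorem locallyConvex_Lpos (p : V) : LocallyConvex Γ.G (Γ.Lpos p) := by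
  intro x y w hx hy hxy hxw hyw
  rcases Γ.ori_total hxw with hxw | hwx <;> rcases Γ.ori_total hyw with hyw | hwy
  · exact Γ.sq_join hx hy (isJoin_of_ori hxy hxw hyw)
  · exact sq_of_mem_Icc hy ((Γ.sq_le hx).tail hxw) (le_of_ori hwy)
  · exact sq_of_mem_Icc hx ((Γ.sq_le hy).tail hyw) (le_of_ori hwx)
  · have hpw := (isMeet_of_ori hxy hwx hwy).2.2 p (Γ.sq_le hx) (Γ.sq_le hy)
    exact sq_of_mem_Icc hx hpw (le_of_ori hwx)

theorem preconnected_Lpos (p : V) : (Γ.G.induce (Γ.Lpos p)).Preconnected := by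
  have hreach {x : V} (hx : Γ.sq p x) {b : V} (hpb : Γ.le p b) (hbx : Γ.le b x) :
      (Γ.G.induce (Γ.Lpos p)).Reachable ⟨p, Γ.sq_refl p⟩
        ⟨b, sq_of_mem_Icc hx hpb hbx⟩ := by
    induction hpb with
    | refl => rfl
    | tail hpb' hb'b ih =>
      exact (ih (.head hb'b hbx)).trans (SimpleGraph.Adj.reachable (Γ.ori_adj hb'b))
  intro ⟨x, hx⟩ ⟨y, hy⟩
  exact (hreach hx (Γ.sq_le hx) .refl).symm.trans (hreach hy (Γ.sq_le hy) .refl)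

theorem convex_Lpos (p : V) : Convex Γ.G (Γ.Lpos p) :=
  (locallyConvex_Lpos p).convex Γ.modular Γ.connected (preconnected_Lpos p)

theorem convex_Lneg (q : V) : Convex Γ.G (Γ.Lneg q) :=
  convex_Lpos (Γ := Γ.dual) q

theorem ori_of_isGate {p q p' q' : V} (hpq : Γ.sq p q) (hp : IsGate Γ.G (Γ.Lneg q) p' p)
    (hq : IsGate Γ.G (Γ.Lpos p) q' q) (ht : Γ.G.dist q q' = Γ.G.dist p p')
    (hk : Γ.G.dist p' q' = Γ.G.dist p q) {e : V} (hqe : Γ.G.Adj q e)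
    (he : Γ.G.dist e q' + 1 = Γ.G.dist q q') : Γ.ori q e := by
  refine (Γ.ori_total hqe).resolve_right fun heq => ?_
  have hpe : Γ.G.dist p e + 1 = Γ.G.dist p q := by
    have := hp.2 e (Γ.sq_edge heq)
    have := Γ.connected.dist_triangle (u := p') (v := q') (w := e)
    have := Γ.connected.dist_triangle (u := p) (v := e) (w := q)
    simp only [SimpleGraph.dist_comm (u := e) (v := q), SimpleGraph.dist_eq_one_iff_adj.2 hqe,
      SimpleGraph.dist_comm (u := p') (v := p), SimpleGraph.dist_comm (u := q') (v := e)] at *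
    omega
  have hle : Γ.le p e := dual_le.1 <| le_of_ori_of_dist_add_one (Γ := Γ.toModularComplex.dual)
    (dual_le.2 (Γ.sq_le hpq)) heq
    (by simpa only [dual_G, SimpleGraph.dist_comm (v := p)] using hpe)
  have := hq.2 e (sq_of_mem_Icc hpq hle (le_of_ori heq))
  simp only [SimpleGraph.dist_comm (u := q'), SimpleGraph.dist_eq_one_iff_adj.2 hqe] at *
  omega

theorem eq_of_isGate {p q p' q' : V} (hpq : Γ.sq p q) (h₁ : IsGate Γ.G (Γ.Lneg q) p' p)
    (h₂ : IsGate Γ.G (Γ.Lpos p) q' q) (h₃ : IsGate Γ.G (Γ.Lneg q') p p')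
    (h₄ : IsGate Γ.G (Γ.Lpos p') q q') : p = p' ∧ q = q' := by
  have F₁ := h₁.2 q (Γ.sq_refl q)
  have F₂ := h₂.2 p (Γ.sq_refl p)
  have F₃ := h₃.2 q' (Γ.sq_refl q')
  have F₄ := h₄.2 p' (Γ.sq_refl p')
  have ht : Γ.G.dist q q' = Γ.G.dist p p' := by simp only [SimpleGraph.dist_comm] at *; omega
  have hk : Γ.G.dist p' q' = Γ.G.dist p q := by simp only [SimpleGraph.dist_comm] at *; omega
  suffices hp : p = p' by
    subst hp
    exact ⟨rfl, Γ.connected.dist_eq_zero_iff.1 (by simpa using ht)⟩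
  by_contra hne
  obtain ⟨c, hpc, hcp'⟩ := Γ.connected.exists_adj_dist_add_one hne
  have hcp : Γ.ori c p := ori_of_isGate (Γ := Γ.dual) hpq h₂ h₁ ht.symm
    (by simpa only [dual_toModularComplex, dual_G, SimpleGraph.dist_comm] using hk) hpc hcp'
  have hcq' : Γ.G.dist c q' + 1 = Γ.G.dist p q' := by
    have := Γ.connected.dist_triangle (u := c) (v := p') (w := q')
    have := Γ.connected.dist_triangle (u := p) (v := c) (w := q')
    simp only [SimpleGraph.dist_eq_one_iff_adj.2 hpc] at *
    simp only [SimpleGraph.dist_comm] at *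
    omega
  obtain ⟨e, heq, he⟩ := exists_ori_dist_add_one_of_le (Γ.sq_le hpq) hcp hcq'
    (by simp only [SimpleGraph.dist_comm] at *; omega)
  exact not_ori_of_ori heq (ori_of_isGate hpq h₁ h₂ ht hk (Γ.ori_adj heq).symm he)

noncomputable def sumDist (Γ : ExtendedModularComplex V) (A B : {pq : V × V // Γ.sq pq.1 pq.2}) :
    ℕ :=
  Γ.G.dist A.1.1 B.1.1 + Γ.G.dist A.1.2 B.1.2

theorem sumDist_comm (A B : {pq : V × V // Γ.sq pq.1 pq.2}) :
    Γ.sumDist A B = Γ.sumDist B A := by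
  simp only [sumDist, SimpleGraph.dist_comm]

theorem sumDist_le_length {A B : {pq : V × V // Γ.sq pq.1 pq.2}} (w : Γ.subdiv.Walk A B) :
    Γ.sumDist A B ≤ w.length := by
  induction w with
  | nil => simp [sumDist]
  | @cons A C B hAC _ ih =>
    have h₁ := Γ.connected.dist_triangle (u := A.1.1) (v := C.1.1) (w := B.1.1)
    have h₂ := Γ.connected.dist_triangle (u := A.1.2) (v := C.1.2) (w := B.1.2)
    rw [SimpleGraph.Walk.length_cons]
    rcases hAC with ⟨heq, hadj⟩ | ⟨heq, hadj⟩ <;>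
      simp only [sumDist, heq, SimpleGraph.dist_self,
        SimpleGraph.dist_eq_one_iff_adj.2 hadj] at * <;> omega

theorem isGate_of_forall_subdiv_adj {A B : {pq : V × V // Γ.sq pq.1 pq.2}}
    (h : ∀ C, Γ.subdiv.Adj A C → Γ.sumDist C B + 1 ≠ Γ.sumDist A B) :
    IsGate Γ.G (Γ.Lneg A.1.2) B.1.1 A.1.1 ∧ IsGate Γ.G (Γ.Lpos A.1.1) B.1.2 A.1.2 := by
  constructor
  · refine Γ.modular.isGate_of_forall_adj Γ.connected (convex_Lneg _) A.2 fun c hc hAc hcB => ?_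
    refine h ⟨(c, A.1.2), hc⟩ (.inr ⟨rfl, hAc⟩) ?_
    simp only [sumDist, SimpleGraph.dist_comm (v := B.1.1)] at *
    omega
  · refine Γ.modular.isGate_of_forall_adj Γ.connected (convex_Lpos _) A.2 fun c hc hAc hcB => ?_
    refine h ⟨(A.1.1, c), hc⟩ (.inl ⟨rfl, hAc⟩) ?_
    simp only [sumDist, SimpleGraph.dist_comm (v := B.1.2)] at *
    omega

theorem exists_subdiv_adj_sumDist_add_one {A B : {pq : V × V // Γ.sq pq.1 pq.2}} (hAB : A ≠ B) :
    (∃ C, Γ.subdiv.Adj A C ∧ Γ.sumDist C B + 1 = Γ.sumDist A B) ∨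
      ∃ C, Γ.subdiv.Adj B C ∧ Γ.sumDist C A + 1 = Γ.sumDist B A := by
  by_contra! h
  obtain ⟨h₁, h₂⟩ := isGate_of_forall_subdiv_adj h.1
  obtain ⟨h₃, h₄⟩ := isGate_of_forall_subdiv_adj h.2
  obtain ⟨hp, hq⟩ := eq_of_isGate A.2 h₁ h₂ h₃ h₄
  exact hAB (Subtype.ext (Prod.ext hp hq))

theorem exists_walk_length_eq_sumDist (A B : {pq : V × V // Γ.sq pq.1 pq.2}) :
    ∃ w : Γ.subdiv.Walk A B, w.length = Γ.sumDist A B := by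
  induction hn : Γ.sumDist A B using Nat.strong_induction_on generalizing A B with
  | _ n ih =>
  obtain rfl | hAB := eq_or_ne A B
  · exact ⟨.nil, by simp [← hn, sumDist]⟩
  rcases exists_subdiv_adj_sumDist_add_one hAB with ⟨C, hAC, hC⟩ | ⟨C, hBC, hC⟩
  · obtain ⟨w, hw⟩ := ih _ (by omega) C B rfl
    exact ⟨.cons hAC w, by simp only [SimpleGraph.Walk.length_cons, hw]; omega⟩
  · have := sumDist_comm A B
    have := sumDist_comm A C
    obtain ⟨w, hw⟩ := ih _ (by omega) A C rfl
    exact ⟨w.concat hBC.symm, by rw [SimpleGraph.Walk.length_concat]; omega⟩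

end ExtendedModularComplex

/-- The 2-subdivision graph is connected and its distance is the sum of
componentwise distances. -/
theorem subdiv_connected_and_dist (Γ : ExtendedModularComplex V) :
    Γ.subdiv.Connected ∧
    ∀ a b : {pq : V × V // Γ.sq pq.1 pq.2},
      Γ.subdiv.dist a b = Γ.G.dist a.1.1 b.1.1 + Γ.G.dist a.1.2 b.1.2 := by
  have hreach (a b : {pq : V × V // Γ.sq pq.1 pq.2}) : Γ.subdiv.Reachable a b :=
    (Γ.exists_walk_length_eq_sumDist a b).elim fun w _ => ⟨w⟩
  obtain ⟨v⟩ := Γ.connected.nonempty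
  refine ⟨(SimpleGraph.connected_iff _).2 ⟨hreach, ⟨⟨(v, v), Γ.sq_refl v⟩⟩⟩,
    fun a b => le_antisymm ?_ ?_⟩
  · obtain ⟨w, hw⟩ := Γ.exists_walk_length_eq_sumDist a b
    exact (SimpleGraph.dist_le w).trans_eq hw
  · obtain ⟨w, hw⟩ := (hreach a b).exists_walk_length_eq_dist
    exact (Γ.sumDist_le_length w).trans_eq hw

end ZeroExt
end

section
/- Let (Γ,⊑) be an extended modular complex. If (p,p',q',q) is an isometric rectangle and p,q are ◇-neighbors, then p',q' are ◇-neighbors. -/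
namespace ZeroExt

variable {V : Type*}

variable [Fintype V]

/-!
In a modular complex directed paths are geodesics. Hence for `x ⪯ y` the metric interval
`I(x, y)` is the order interval `[x, y]`, principal filters are convex, and two elements with a
common upper (lower) bound have a join (meet), lying on a geodesic between them.

Splitting the rectangle by medians along a geodesic from `p` to `p'` reduces the claim to the case
where `p p'` is an edge, and passing to the opposite complex to `p → p'`. Admissibility,
propagated along the ladder of 4-cycles between the sides `p q` and `p' q'`, gives `q → q'` and
lifts every `x` on a geodesic from `p` to `q` to an edge `x → x'` with `x'` on a geodesic from
`p'` to `q'`. Now let `a ⊑ b` with `p, q ∈ [a, b]`, `m = p ∧ q` and `c = p ∨ q`. Since `m` is also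
`p ∧ q'`, the lift `m'` lies below `p'` and `q'` but not below `p`, so `p' = p ∨ m'`; as `m ⊑ p`
by (i) and `m ⊑ m'`, (ii) gives `m ⊑ p'`, and likewise `m ⊑ q'`. The lift `c'` is an upper bound
of `p'` and `q'`, so `p' ∨ q'` exists, and `m ⊑ p' ∨ q'` by (ii) once more.
-/

theorem _root_.SimpleGraph.exists_adj_dist_add_one {α : Type*} {G : SimpleGraph α} {x y : α}
    (h : G.dist x y ≠ 0) : ∃ u, G.Adj x u ∧ G.dist u y + 1 = G.dist x y := by
  obtain ⟨w, hw⟩ := SimpleGraph.exists_walk_of_dist_ne_zero h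
  cases w with
  | nil => simp at h
  | @cons _ u _ hxu w =>
    refine ⟨u, hxu, ?_⟩
    have := SimpleGraph.dist_le w
    have := hxu.reachable.dist_triangle_left y
    have := SimpleGraph.dist_eq_one_iff_adj.mpr hxu
    simp only [SimpleGraph.Walk.length_cons] at hw
    omega

namespace Modular

variable {α : Type*} {G : SimpleGraph α} (hM : Modular G) (hG : G.Connected)
include hM hG

theorem dist_eq_add_one_or_of_adj_s9 {u v : α} (huv : G.Adj u v) (w : α) :
    G.dist w v = G.dist w u + 1 ∨ G.dist w u = G.dist w v + 1 := by
  obtain ⟨m, hm₁, hm₂, hm₃⟩ := hM u v w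
  have := SimpleGraph.dist_eq_one_iff_adj.mpr huv
  have := G.dist_comm (u := u) (v := v)
  have := G.dist_comm (u := w) (v := u)
  have := G.dist_comm (u := w) (v := v)
  simp only [interval, Set.mem_ofPred_eq] at hm₁ hm₂ hm₃
  rcases (by omega : G.dist u m = 0 ∨ G.dist m v = 0) with h | h
  · obtain rfl := hG.dist_eq_zero_iff.mp h
    omega
  · obtain rfl := hG.dist_eq_zero_iff.mp h
    omega

theorem exists_adj_adj_dist_add_two {u x y w : α} (hxw : G.Adj x w) (hyw : G.Adj y w)
    (hxy : x ≠ y) (hx : G.dist u x + 1 = G.dist u w) (hy : G.dist u y + 1 = G.dist u w) :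
    ∃ z, G.Adj x z ∧ G.Adj y z ∧ G.dist u z + 2 = G.dist u w := by
  have hdxy : G.dist x y = 2 := by
    have := hG.dist_triangle (u := x) (v := w) (w := y)
    have := SimpleGraph.dist_eq_one_iff_adj.mpr hxw
    have := SimpleGraph.dist_eq_one_iff_adj.mpr hyw.symm
    have := hG.pos_dist_of_ne hxy
    have : G.dist x y ≠ 1 := fun h ↦ by
      rcases hM.dist_eq_add_one_or_of_adj_s9 hG (SimpleGraph.dist_eq_one_iff_adj.mp h) u with h | h <;>
        omega
    omega
  obtain ⟨z, hz₁, hz₂, hz₃⟩ := hM x y u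
  simp only [interval, Set.mem_ofPred_eq] at hz₁ hz₂ hz₃
  have := hG.dist_triangle (u := u) (v := x) (w := y)
  have := G.dist_comm (u := u) (v := x)
  have := G.dist_comm (u := u) (v := y)
  have := G.dist_comm (u := u) (v := z)
  have := G.dist_comm (u := y) (v := z)
  have hxz : G.dist x z ≠ 0 := fun h ↦ by
    obtain rfl := hG.dist_eq_zero_iff.mp h
    omega
  have hyz : G.dist z y ≠ 0 := fun h ↦ by
    obtain rfl := hG.dist_eq_zero_iff.mp h
    omega
  refine ⟨z, SimpleGraph.dist_eq_one_iff_adj.mp ?_, SimpleGraph.dist_eq_one_iff_adj.mp ?_, ?_⟩ <;>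
    omega

end Modular

namespace IsoRect

variable {α : Type*} {G : SimpleGraph α} {a b c d : α}

theorem rotate (h : IsoRect G a b c d) : IsoRect G b c d a :=
  ⟨h.2.1, h.2.2.1, h.2.2.2, h.1⟩

theorem reflect (h : IsoRect G a b c d) : IsoRect G a d c b := by
  obtain ⟨h₁, h₂, h₃, h₄⟩ := h
  have := G.dist_comm (u := a) (v := b); have := G.dist_comm (u := b) (v := c)
  have := G.dist_comm (u := c) (v := d); have := G.dist_comm (u := d) (v := a)
  have := G.dist_comm (u := a) (v := c); have := G.dist_comm (u := b) (v := d)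
  simp only [IsoRect, ShortestTriple] at *
  refine ⟨?_, ?_, ?_, ?_⟩ <;> omega

theorem dist_eq (h : IsoRect G a b c d) :
    G.dist a b = G.dist d c ∧ G.dist b c = G.dist a d ∧
      G.dist a c = G.dist a b + G.dist b c ∧ G.dist b d = G.dist a b + G.dist b c := by
  obtain ⟨h₁, h₂, h₃, h₄⟩ := h
  have := G.dist_comm (u := a) (v := b); have := G.dist_comm (u := b) (v := c)
  have := G.dist_comm (u := c) (v := d); have := G.dist_comm (u := d) (v := a)
  have := G.dist_comm (u := a) (v := c); have := G.dist_comm (u := b) (v := d)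
  simp only [ShortestTriple] at *
  refine ⟨?_, ?_, ?_, ?_⟩ <;> omega

theorem isFourCycle (h : IsoRect G a b c d) (hab : G.Adj a b) (had : G.Adj a d) :
    IsFourCycle G a b c d := by
  obtain ⟨hdc, hbc, hac, hbd⟩ := h.dist_eq
  rw [SimpleGraph.dist_eq_one_iff_adj.mpr hab, SimpleGraph.dist_eq_one_iff_adj.mpr had] at *
  refine ⟨hab, SimpleGraph.dist_eq_one_iff_adj.mp hbc, ?_, had.symm, ?_, ?_⟩
  · rw [G.dist_comm] at hdc
    exact SimpleGraph.dist_eq_one_iff_adj.mp hdc.symm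
  · rintro rfl
    rw [SimpleGraph.dist_self] at hac
    omega
  · rintro rfl
    rw [SimpleGraph.dist_self] at hbd
    omega

/-- The fourth corner `w` is a median of `u`, `d`, `c`. -/
theorem split (hM : Modular G) (hG : G.Connected) {u : α} (h : IsoRect G a b c d)
    (hu : G.dist a u + G.dist u b = G.dist a b) :
    ∃ w, IsoRect G a u w d ∧ IsoRect G u b c w := by
  obtain ⟨w, hw₁, hw₂, hw₃⟩ := hM d c u
  simp only [interval, Set.mem_ofPred_eq] at hw₁ hw₂ hw₃
  obtain ⟨h₁, h₂, h₃, h₄⟩ := h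
  have := hG.dist_triangle (u := d) (v := u) (w := b)
  have := hG.dist_triangle (u := d) (v := a) (w := u)
  have := hG.dist_triangle (u := c) (v := b) (w := u)
  have := hG.dist_triangle (u := c) (v := u) (w := a)
  have := hG.dist_triangle (u := a) (v := u) (w := w)
  have := hG.dist_triangle (u := a) (v := w) (w := c)
  have := hG.dist_triangle (u := b) (v := u) (w := w)
  have := hG.dist_triangle (u := b) (v := w) (w := d)
  have := G.dist_comm (u := a) (v := b); have := G.dist_comm (u := b) (v := c)
  have := G.dist_comm (u := c) (v := d); have := G.dist_comm (u := d) (v := a)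
  have := G.dist_comm (u := a) (v := c); have := G.dist_comm (u := b) (v := d)
  have := G.dist_comm (u := u) (v := a); have := G.dist_comm (u := u) (v := b)
  have := G.dist_comm (u := u) (v := c); have := G.dist_comm (u := u) (v := d)
  have := G.dist_comm (u := w) (v := a); have := G.dist_comm (u := w) (v := b)
  have := G.dist_comm (u := w) (v := c); have := G.dist_comm (u := w) (v := d)
  have := G.dist_comm (u := w) (v := u)
  simp only [IsoRect, ShortestTriple] at *
  refine ⟨w, ⟨?_, ?_, ?_, ?_⟩, ⟨?_, ?_, ?_, ?_⟩⟩ <;> omega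

end IsoRect

namespace ModularComplex

variable (Γ : ModularComplex V)

theorem ori_asymm {x y : V} (h : Γ.ori x y) : ¬ Γ.ori y x := fun h' ↦
  (Γ.ori_adj h).ne (Γ.acyclic (.single h) (.single h'))

theorem dist_ori {x y : V} (h : Γ.ori x y) : Γ.G.dist x y = 1 :=
  SimpleGraph.dist_eq_one_iff_adj.mpr (Γ.ori_adj h)

/-- If `c → s` moved back towards `x`, the quadrangle condition at `c` and admissibility would
give an edge `c' → z` with the same defect one step earlier on the path from `x` to `c`. -/
theorem dist_add_one_of_le_of_ori {x c s : V} (hxc : Γ.le x c) (hcs : Γ.ori c s) :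
    Γ.G.dist x c + 1 = Γ.G.dist x s := by
  induction hxc generalizing s with
  | refl => simp [Γ.dist_ori hcs]
  | @tail c' c _ hc'c ih =>
    have hc := ih hc'c
    rcases Γ.modular.dist_eq_add_one_or_of_adj_s9 Γ.connected (Γ.ori_adj hcs) x with h | h
    · omega
    have hsc' : s ≠ c' := by rintro rfl; exact Γ.ori_asymm hcs hc'c
    obtain ⟨z, hc'z, hsz, hz⟩ := Γ.modular.exists_adj_adj_dist_add_two Γ.connected
      (Γ.ori_adj hc'c) (Γ.ori_adj hcs).symm hsc'.symm (by omega) (by omega)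
    have hcyc : IsFourCycle Γ.G c s z c' :=
      ⟨Γ.ori_adj hcs, hsz, hc'z.symm, Γ.ori_adj hc'c, by rintro rfl; omega, hsc'⟩
    have := ih (Γ.admissible hcyc hcs)
    omega

theorem dist_add_dist_of_le {x y z : V} (hxy : Γ.le x y) (hyz : Γ.le y z) :
    Γ.G.dist x y + Γ.G.dist y z = Γ.G.dist x z := by
  induction hyz with
  | refl => simp
  | @tail z z' hyz hzz' ih =>
    have := Γ.dist_add_one_of_le_of_ori (hxy.trans hyz) hzz'
    have := Γ.dist_add_one_of_le_of_ori hyz hzz'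
    omega

theorem ori_and_le_of_adj {x y x₁ : V} (hxy : Γ.le x y) (hxx₁ : Γ.G.Adj x x₁)
    (hx₁ : Γ.G.dist x₁ y + 1 = Γ.G.dist x y) : Γ.ori x x₁ ∧ Γ.le x₁ y := by
  induction hxy using Relation.ReflTransGen.head_induction_on generalizing x₁ with
  | refl => simp at hx₁
  | @head x c hxc hcy ih =>
    by_cases hx₁c : x₁ = c
    · subst hx₁c
      exact ⟨hxc, hcy⟩
    have := Γ.dist_add_dist_of_le (.single hxc) hcy
    have := Γ.dist_ori hxc
    have := Γ.G.dist_comm (u := y) (v := x)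
    have := Γ.G.dist_comm (u := y) (v := c)
    have := Γ.G.dist_comm (u := y) (v := x₁)
    obtain ⟨z, hx₁z, hcz, hz⟩ := Γ.modular.exists_adj_adj_dist_add_two Γ.connected (u := y)
      hxx₁.symm (Γ.ori_adj hxc).symm hx₁c (by omega) (by omega)
    have := Γ.G.dist_comm (u := y) (v := z)
    obtain ⟨hcz', hzy⟩ := ih hcz (by omega)
    have hxz : x ≠ z := by rintro rfl; omega
    have hcyc : IsFourCycle Γ.G x c z x₁ :=
      ⟨Γ.ori_adj hxc, hcz, hx₁z.symm, hxx₁.symm, hxz, Ne.symm hx₁c⟩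
    have hcyc' : IsFourCycle Γ.G x₁ x c z :=
      ⟨hxx₁.symm, Γ.ori_adj hxc, hcz, hx₁z.symm, hx₁c, hxz⟩
    exact ⟨(Γ.ori_total hxx₁).resolve_right fun hx₁x ↦ Γ.ori_asymm hcz' (Γ.admissible hcyc' hx₁x),
      .head (Γ.admissible hcyc hxc) hzy⟩

theorem le_and_le_of_dist_add_dist_eq {x y z : V} (hxy : Γ.le x y)
    (hz : Γ.G.dist x z + Γ.G.dist z y = Γ.G.dist x y) : Γ.le x z ∧ Γ.le z y := by
  induction hn : Γ.G.dist x z generalizing x with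
  | zero =>
    obtain rfl := Γ.connected.dist_eq_zero_iff.mp hn
    exact ⟨.refl, hxy⟩
  | succ n ih =>
    obtain ⟨x₁, hxx₁, hx₁⟩ := SimpleGraph.exists_adj_dist_add_one (by omega : Γ.G.dist x z ≠ 0)
    have := Γ.connected.dist_triangle (u := x₁) (v := z) (w := y)
    have := Γ.connected.dist_triangle (u := x) (v := x₁) (w := y)
    have := SimpleGraph.dist_eq_one_iff_adj.mpr hxx₁
    obtain ⟨hxx₁', hx₁y⟩ := Γ.ori_and_le_of_adj hxy hxx₁ (by omega)
    obtain ⟨hx₁z, hzy⟩ := ih hx₁y (by omega) (by omega)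
    exact ⟨.head hxx₁' hx₁z, hzy⟩

theorem le_of_adj_of_dist_add_one {v z₁ z₂ w : V} (hvz₁ : Γ.le v z₁) (hvz₂ : Γ.le v z₂)
    (hv : Γ.G.dist z₁ v + Γ.G.dist v z₂ = Γ.G.dist z₁ z₂) (hz₁w : Γ.G.Adj z₁ w)
    (hw : Γ.G.dist w z₂ + 1 = Γ.G.dist z₁ z₂) : Γ.le v w := by
  induction hvz₁ generalizing w with
  | refl =>
    have := SimpleGraph.dist_eq_one_iff_adj.mpr hz₁w
    exact (Γ.le_and_le_of_dist_add_dist_eq hvz₂ (by omega)).1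
  | @tail v₁ z₁ hvv₁ hv₁z₁ ih =>
    by_cases hv₁w : v₁ = w
    · exact hv₁w ▸ hvv₁
    have := Γ.dist_add_dist_of_le hvv₁ (.single hv₁z₁)
    have := Γ.dist_ori hv₁z₁
    have := Γ.connected.dist_triangle (u := v₁) (v := v) (w := z₂)
    have := Γ.connected.dist_triangle (u := z₁) (v := v₁) (w := z₂)
    have := Γ.G.dist_comm (u := v) (v := v₁)
    have := Γ.G.dist_comm (u := v) (v := z₁)
    have := Γ.G.dist_comm (u := v₁) (v := z₁)
    have := Γ.G.dist_comm (u := z₂) (v := z₁)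
    have := Γ.G.dist_comm (u := z₂) (v := v₁)
    have := Γ.G.dist_comm (u := z₂) (v := w)
    obtain ⟨s, hv₁s, hws, hs⟩ := Γ.modular.exists_adj_adj_dist_add_two Γ.connected (u := z₂)
      (Γ.ori_adj hv₁z₁) hz₁w.symm hv₁w (by omega) (by omega)
    have := Γ.G.dist_comm (u := z₂) (v := s)
    have hvs := ih (by omega) hv₁s (by omega)
    have hcyc : IsFourCycle Γ.G v₁ z₁ w s :=
      ⟨Γ.ori_adj hv₁z₁, hz₁w, hws, hv₁s.symm, hv₁w, by rintro rfl; omega⟩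
    exact hvs.tail (Γ.admissible hcyc hv₁z₁)

theorem convex_setOf_le (q : V) : Convex Γ.G {z | Γ.le q z} := by
  intro z₁ hz₁ z₂ hz₂ z hz
  simp only [interval, Set.mem_ofPred_eq] at *
  induction hn : Γ.G.dist z₁ z generalizing z₁ with
  | zero => rwa [← Γ.connected.dist_eq_zero_iff.mp hn]
  | succ n ih =>
    obtain ⟨w, hz₁w, hw⟩ := SimpleGraph.exists_adj_dist_add_one (by omega : Γ.G.dist z₁ z ≠ 0)
    have := SimpleGraph.dist_eq_one_iff_adj.mpr hz₁w
    have := Γ.connected.dist_triangle (u := w) (v := z) (w := z₂)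
    have := Γ.connected.dist_triangle (u := z₁) (v := w) (w := z₂)
    obtain ⟨v, hv₁, hv₂, hv₃⟩ := Γ.modular z₁ z₂ q
    simp only [interval, Set.mem_ofPred_eq] at hv₁ hv₂ hv₃
    have := Γ.G.dist_comm (u := z₁) (v := q)
    have := Γ.G.dist_comm (u := z₁) (v := v)
    have := Γ.G.dist_comm (u := z₂) (v := q)
    have := Γ.G.dist_comm (u := z₂) (v := v)
    have := Γ.G.dist_comm (u := v) (v := q)
    obtain ⟨hqv, hvz₁⟩ := Γ.le_and_le_of_dist_add_dist_eq hz₁ (z := v) (by omega)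
    obtain ⟨-, hvz₂⟩ := Γ.le_and_le_of_dist_add_dist_eq hz₂ (z := v) (by omega)
    exact ih w (hqv.trans (Γ.le_of_adj_of_dist_add_one hvz₁ hvz₂ hv₁ hz₁w (by omega)))
      (by omega) (by omega)

/-- An upper bound `j` nearest to `p` is the join: the median of `j`, `z`, `p` for any other upper
bound `z` is again an upper bound (by convexity), lies between `p` and `j`, and below `z`. -/
theorem exists_isJoin {p q x : V} (hp : Γ.le p x) (hq : Γ.le q x) : ∃ j, Γ.IsJoin p q j := by
  obtain ⟨j, ⟨hpj, hqj⟩, hmin⟩ := Set.exists_min_image {z | Γ.le p z ∧ Γ.le q z}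
    (Γ.G.dist p) (Set.toFinite _) ⟨x, hp, hq⟩
  refine ⟨j, hpj, hqj, fun z hpz hqz ↦ ?_⟩
  obtain ⟨m, hm₁, hm₂, hm₃⟩ := Γ.modular j z p
  have hqm : Γ.le q m := Γ.convex_setOf_le q j hqj z hqz hm₁
  simp only [interval, Set.mem_ofPred_eq] at hm₁ hm₂ hm₃
  have := Γ.G.dist_comm (u := j) (v := p)
  have := Γ.G.dist_comm (u := j) (v := m)
  have := Γ.G.dist_comm (u := z) (v := p)
  have := Γ.G.dist_comm (u := z) (v := m)
  have := Γ.G.dist_comm (u := m) (v := p)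
  obtain ⟨hpm, hmj⟩ := Γ.le_and_le_of_dist_add_dist_eq hpj (z := m) (by omega)
  obtain ⟨-, hmz⟩ := Γ.le_and_le_of_dist_add_dist_eq hpz (z := m) (by omega)
  have := hmin m ⟨hpm, hqm⟩
  have := Γ.dist_add_dist_of_le hpm hmj
  obtain rfl : m = j := Γ.connected.dist_eq_zero_iff.mp (by omega)
  exact hmz

theorem isJoin_of_ori_s9 {p p' x : V} (hpp' : Γ.ori p p') (hxp' : Γ.le x p') (hxp : ¬ Γ.le x p) :
    Γ.IsJoin p x p' := by
  obtain ⟨j, hj⟩ := Γ.exists_isJoin (.single hpp') hxp'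
  have hjp' := hj.2.2 p' (.single hpp') hxp'
  have := Γ.dist_add_dist_of_le hj.1 hjp'
  rw [Γ.dist_ori hpp'] at this
  rcases (by omega : Γ.G.dist p j = 0 ∨ Γ.G.dist j p' = 0) with h | h
  · obtain rfl := Γ.connected.dist_eq_zero_iff.mp h
    exact absurd hj.2.1 hxp
  · obtain rfl := Γ.connected.dist_eq_zero_iff.mp h
    exact hj

theorem ori_of_isoRect {p p' q' q : V} (h : IsoRect Γ.G p p' q' q) (hpp' : Γ.ori p p') :
    Γ.ori q q' := by
  induction hn : Γ.G.dist p q generalizing p p' with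
  | zero =>
    obtain rfl := Γ.connected.dist_eq_zero_iff.mp hn
    obtain rfl : p' = q' := Γ.connected.dist_eq_zero_iff.mp (h.dist_eq.2.1.trans hn)
    exact hpp'
  | succ n ih =>
    obtain ⟨u, hpu, hu⟩ := SimpleGraph.exists_adj_dist_add_one (by omega : Γ.G.dist p q ≠ 0)
    have := SimpleGraph.dist_eq_one_iff_adj.mpr hpu
    obtain ⟨w, hpuwp', huqq'w⟩ := h.reflect.split Γ.modular Γ.connected (u := u) (by omega)
    have huw := Γ.admissible (hpuwp'.reflect.isFourCycle (Γ.ori_adj hpp') hpu) hpp'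
    exact ih huqq'w.reflect huw (by omega)

theorem le_of_isoRect {p p' q' q : V} (h : IsoRect Γ.G p p' q' q) (hpp' : Γ.ori p p')
    (hpq : Γ.le p q) : Γ.le p' q' := by
  induction hpq using Relation.ReflTransGen.head_induction_on generalizing p' with
  | refl =>
    obtain rfl : p' = q' := Γ.connected.dist_eq_zero_iff.mp (h.dist_eq.2.1.trans (by simp))
    exact .refl
  | @head p u hpu huq ih =>
    obtain ⟨w, hpuwp', huqq'w⟩ := h.reflect.split Γ.modular Γ.connected
      (Γ.dist_add_dist_of_le (.single hpu) huq)
    have huw := Γ.admissible (hpuwp'.reflect.isFourCycle (Γ.ori_adj hpp') (Γ.ori_adj hpu)) hpp'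
    have hp'w := Γ.admissible (hpuwp'.isFourCycle (Γ.ori_adj hpu) (Γ.ori_adj hpp')) hpu
    exact .head hp'w (ih huqq'w.reflect huw)

theorem exists_ori_isoRect {p p' q' q x : V} (h : IsoRect Γ.G p p' q' q) (hpp' : Γ.ori p p')
    (hx : Γ.G.dist p x + Γ.G.dist x q = Γ.G.dist p q) :
    ∃ x', Γ.ori x x' ∧ IsoRect Γ.G p p' x' x ∧ IsoRect Γ.G x x' q' q := by
  obtain ⟨x', h₁, h₂⟩ := h.reflect.split Γ.modular Γ.connected hx
  exact ⟨x', Γ.ori_of_isoRect h₁.reflect hpp', h₁.reflect, h₂.reflect⟩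

end ModularComplex

def ModularComplex.op (Γ : ModularComplex V) : ModularComplex V where
  G := Γ.G
  connected := Γ.connected
  modular := Γ.modular
  ori x y := Γ.ori y x
  ori_adj h := (Γ.ori_adj h).symm
  ori_total h := (Γ.ori_total h).symm
  acyclic h₁ h₂ :=
    (Γ.acyclic (Relation.reflTransGen_swap.mp h₁) (Relation.reflTransGen_swap.mp h₂)).symm
  admissible := fun ⟨h₁₂, h₂₃, h₃₄, h₄₁, h₁₃, h₂₄⟩ ↦
    Γ.admissible ⟨h₁₂.symm, h₄₁.symm, h₃₄.symm, h₂₃.symm, h₂₄, h₁₃⟩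

namespace ModularComplex

variable (Γ : ModularComplex V)

theorem op_le {x y : V} : Γ.op.le x y ↔ Γ.le y x :=
  Relation.reflTransGen_swap

theorem op_isMeet {p q m : V} : Γ.op.IsMeet p q m ↔ Γ.IsJoin p q m := by
  simp only [IsMeet, IsJoin, op_le]

theorem op_isJoin {p q j : V} : Γ.op.IsJoin p q j ↔ Γ.IsMeet p q j := by
  simp only [IsMeet, IsJoin, op_le]

theorem exists_isMeet {p q x : V} (hp : Γ.le x p) (hq : Γ.le x q) : ∃ m, Γ.IsMeet p q m :=
  (Γ.op.exists_isJoin (Γ.op_le.mpr hp) (Γ.op_le.mpr hq)).imp fun _ ↦ Γ.op_isJoin.mp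

variable {Γ} {p q m : V}

theorem IsMeet.symm (h : Γ.IsMeet p q m) : Γ.IsMeet q p m :=
  ⟨h.2.1, h.1, fun x hxq hxp ↦ h.2.2 x hxp hxq⟩

theorem IsMeet.dist_add_dist (h : Γ.IsMeet p q m) :
    Γ.G.dist p m + Γ.G.dist m q = Γ.G.dist p q := by
  obtain ⟨s, hs₁, hs₂, hs₃⟩ := Γ.modular p q m
  simp only [interval, Set.mem_ofPred_eq] at hs₁ hs₂ hs₃
  have := Γ.G.dist_comm (u := m) (v := s)
  have := Γ.G.dist_comm (u := m) (v := p)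
  have := Γ.G.dist_comm (u := m) (v := q)
  have := Γ.G.dist_comm (u := s) (v := p)
  have := Γ.G.dist_comm (u := s) (v := q)
  obtain ⟨hms, hsp⟩ := Γ.le_and_le_of_dist_add_dist_eq h.1 (z := s) (by omega)
  obtain ⟨-, hsq⟩ := Γ.le_and_le_of_dist_add_dist_eq h.2.1 (z := s) (by omega)
  obtain rfl := Γ.acyclic hms (h.2.2 s hsp hsq)
  exact hs₁

theorem IsJoin.dist_add_dist (h : Γ.IsJoin p q m) :
    Γ.G.dist p m + Γ.G.dist m q = Γ.G.dist p q :=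
  (Γ.op_isMeet.mpr h).dist_add_dist

theorem IsMeet.of_ori {q' : V} (hm : Γ.IsMeet p q m) (hqq' : Γ.ori q q')
    (hq' : Γ.G.dist p q + 1 = Γ.G.dist p q') : Γ.IsMeet p q' m := by
  have hmq' : Γ.le m q' := hm.2.1.tail hqq'
  obtain ⟨m', hm'⟩ := Γ.exists_isMeet hm.1 hmq'
  have hmm' := hm'.2.2 m hm.1 hmq'
  have := hm.dist_add_dist
  have := hm'.dist_add_dist
  have := Γ.dist_add_dist_of_le hmm' hm'.1
  have := Γ.dist_add_dist_of_le hmm' hm'.2.1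
  have := Γ.dist_add_one_of_le_of_ori hm.2.1 hqq'
  have := Γ.G.dist_comm (u := p) (v := m)
  have := Γ.G.dist_comm (u := p) (v := m')
  obtain rfl := Γ.connected.dist_eq_zero_iff.mp (by omega : Γ.G.dist m m' = 0)
  exact hm'

end ModularComplex

namespace ExtendedModularComplex

def op (Γ : ExtendedModularComplex V) : ExtendedModularComplex V where
  toModularComplex := Γ.toModularComplex.op
  sq x y := Γ.sq y x
  sq_le h := Γ.op_le.mpr (Γ.sq_le h)
  sq_refl := Γ.sq_refl
  sq_edge := Γ.sq_edge
  sq_interval hpq hab ha hb :=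
    Γ.sq_interval hpq (Γ.op_le.mp hab) ⟨Γ.op_le.mp hb.2, Γ.op_le.mp hb.1⟩
      ⟨Γ.op_le.mp ha.2, Γ.op_le.mp ha.1⟩
  sq_join h₁ h₂ hj := Γ.sq_meet h₁ h₂ (Γ.op_isJoin.mp hj)
  sq_meet h₁ h₂ hm := Γ.sq_join h₁ h₂ (Γ.op_isMeet.mp hm)

variable (Γ : ExtendedModularComplex V)

theorem diamondNb_op {p q : V} : Γ.op.DiamondNb p q ↔ Γ.DiamondNb p q :=
  ⟨fun ⟨a, b, hab, ⟨hap, hpb⟩, ⟨haq, hqb⟩⟩ ↦ ⟨b, a, hab, ⟨Γ.op_le.mp hpb, Γ.op_le.mp hap⟩,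
      ⟨Γ.op_le.mp hqb, Γ.op_le.mp haq⟩⟩,
    fun ⟨a, b, hab, ⟨hap, hpb⟩, ⟨haq, hqb⟩⟩ ↦ ⟨b, a, hab, ⟨Γ.op_le.mpr hpb, Γ.op_le.mpr hap⟩,
      ⟨Γ.op_le.mpr hqb, Γ.op_le.mpr haq⟩⟩⟩

theorem sq_of_ori_of_isMeet {m m' p p' q' : V} (hmp : Γ.sq m p) (hpp' : Γ.ori p p')
    (hm : Γ.IsMeet p q' m) (hmm' : Γ.ori m m') (hm'p' : Γ.le m' p') (hm'q' : Γ.le m' q') :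
    Γ.sq m p' := by
  have hm'p : ¬ Γ.le m' p := fun h ↦
    (Γ.ori_adj hmm').ne (Γ.acyclic (.single hmm') (hm.2.2 m' h hm'q'))
  exact Γ.sq_join hmp (Γ.sq_edge hmm') (Γ.isJoin_of_ori_s9 hpp' hm'p' hm'p)

theorem diamondNb_of_isoRect_of_ori {p p' q' q : V} (hrect : IsoRect Γ.G p p' q' q)
    (hpp' : Γ.ori p p') (hpq : Γ.DiamondNb p q) : Γ.DiamondNb p' q' := by
  obtain ⟨a, b, hab, ⟨hap, hpb⟩, ⟨haq, hqb⟩⟩ := hpq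
  have hqq' := Γ.ori_of_isoRect hrect hpp'
  obtain ⟨m, hm⟩ := Γ.exists_isMeet hap haq
  obtain ⟨c, hc⟩ := Γ.exists_isJoin hpb hqb
  obtain ⟨m', hmm', hpp'm'm, hmm'q'q⟩ := Γ.exists_ori_isoRect hrect hpp' hm.dist_add_dist
  obtain ⟨c', -, hpp'c'c, hcc'q'q⟩ := Γ.exists_ori_isoRect hrect hpp' hc.dist_add_dist
  have hm'p' := Γ.le_of_isoRect hpp'm'm.reflect.rotate hmm' hm.1
  have hm'q' := Γ.le_of_isoRect hmm'q'q hmm' hm.2.1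
  obtain ⟨C, hC⟩ := Γ.exists_isJoin (Γ.le_of_isoRect hpp'c'c hpp' hc.1)
    (Γ.le_of_isoRect hcc'q'q.reflect.rotate hqq' hc.2.1)
  have ham := hm.2.2 a hap haq
  have hmp' := Γ.sq_of_ori_of_isMeet (Γ.sq_interval hab hm.1 ⟨ham, hm.1.trans hpb⟩ ⟨hap, hpb⟩)
    hpp' (hm.of_ori hqq' (by rw [← Γ.dist_ori hqq']; exact hrect.reflect.rotate.1)) hmm' hm'p' hm'q'
  have hmq' := Γ.sq_of_ori_of_isMeet (Γ.sq_interval hab hm.2.1 ⟨ham, hm.2.1.trans hqb⟩ ⟨haq, hqb⟩)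
    hqq' (hm.symm.of_ori hpp' (by rw [← Γ.dist_ori hpp']; exact hrect.1)) hmm' hm'q' hm'p'
  exact ⟨m, C, Γ.sq_join hmp' hmq' hC, ⟨hm.1.tail hpp', hC.1⟩, ⟨hm.2.1.tail hqq', hC.2.1⟩⟩

theorem diamondNb_of_isoRect_of_adj {p p' q' q : V} (hrect : IsoRect Γ.G p p' q' q)
    (hpp' : Γ.G.Adj p p') (hpq : Γ.DiamondNb p q) : Γ.DiamondNb p' q' := by
  rcases Γ.ori_total hpp' with h | h
  · exact Γ.diamondNb_of_isoRect_of_ori hrect h hpq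
  · exact Γ.diamondNb_op.mp (Γ.op.diamondNb_of_isoRect_of_ori hrect h (Γ.diamondNb_op.mpr hpq))

end ExtendedModularComplex

/-- If `(p,p',q',q)` is an isometric rectangle and `p, q` are
◇-neighbors, then `p', q'` are ◇-neighbors. -/
theorem diamondNb_of_isoRect (Γ : ExtendedModularComplex V) (p p' q' q : V)
    (hrect : IsoRect Γ.G p p' q' q) (hpq : Γ.DiamondNb p q) : Γ.DiamondNb p' q' := by
  induction hn : Γ.G.dist p p' generalizing p q with
  | zero =>
    obtain rfl := Γ.connected.dist_eq_zero_iff.mp hn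
    obtain rfl : q = q' := Γ.connected.dist_eq_zero_iff.mp (hrect.dist_eq.1.symm.trans hn)
    exact hpq
  | succ n ih =>
    obtain ⟨u, hpu, hu⟩ := SimpleGraph.exists_adj_dist_add_one (by omega : Γ.G.dist p p' ≠ 0)
    have := SimpleGraph.dist_eq_one_iff_adj.mpr hpu
    obtain ⟨w, hpuwq, hup'q'w⟩ := hrect.split Γ.modular Γ.connected (u := u) (by omega)
    exact ih u w hup'q'w (Γ.diamondNb_of_isoRect_of_adj hpuwq hpu hpq) (by omega)

end ZeroExt
end
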